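/- Let S be a subordinator with Laplace exponent φ that is unbounded (φ(λ) → ∞ as λ → ∞) and let L be its inverse. Then for every γ ∈ ℝ and every λ > φ^{-1}(γ ∨ 0), ∫_0^∞ e^{-λ t} E[e^{γ L_t}] dt = φ(λ)/(λ(φ(λ) - γ)). -/

import Mathlib

open MeasureTheory Real Set Filter
open scoped ENNReal

section Stmt2Aux

variable {Ω : Type*} [MeasurableSpace Ω]

private lemma exp_int (a : ℝ) {b : ℝ} (hb : 0 < b) :
    IntegrableOn (fun t : ℝ => Real.exp (-(b * t))) (Ioi a) := by
  simpa [neg_mul] using exp_neg_integrableOn_Ioi a hb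

private lemma exp_val (a : ℝ) {b : ℝ} (hb : 0 < b) :
    ∫ t in Ioi a, Real.exp (-(b * t)) = Real.exp (-(b * a)) / b := by
  have hderiv : ∀ x ∈ Ici a,
      HasDerivAt (fun x => -Real.exp (-(b * x)) / b) (Real.exp (-(b * x))) x := by
    intro x _
    have h1 : HasDerivAt (fun x : ℝ => -(b * x)) (-b) x := by
      simpa [neg_mul] using (hasDerivAt_id x).const_mul (-b)
    have h2 := (Real.hasDerivAt_exp (-(b * x))).comp x h1
    have h3 := (h2.neg).div_const b
    exact h3.congr_deriv (by rw [mul_neg, neg_neg, mul_div_assoc, div_self hb.ne', mul_one])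
  have h0 : Tendsto (fun x : ℝ => -Real.exp (-(b * x)) / b) atTop (nhds (-0 / b)) := by
    refine Tendsto.div_const (Tendsto.neg ?_) _
    have h : Tendsto (fun x : ℝ => -(b * x)) atTop atBot := by
      simpa [neg_mul] using tendsto_id.const_mul_atTop_of_neg (neg_neg_iff_pos.2 hb)
    exact Real.tendsto_exp_atBot.comp h
  have := integral_Ioi_of_hasDerivAt_of_tendsto' hderiv (exp_int a hb) (by simpa using h0)
  rw [this]; ring

private lemma exp_lval (a : ℝ) {b : ℝ} (hb : 0 < b) :
    ∫⁻ t in Ioi a, ENNReal.ofReal (Real.exp (-(b * t)))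
      = ENNReal.ofReal (Real.exp (-(b * a)) / b) := by
  rw [← ofReal_integral_eq_lintegral_ofReal (exp_int a hb)
    (ae_of_all _ fun x => (Real.exp_pos _).le), exp_val a hb]

/-- rational approximation of the inverse subordinator -/
private noncomputable def Lq (S : ℝ → Ω → ℝ) (t : ℝ) (ω : Ω) : ℝ :=
  sInf {x : ℝ | ∃ q : ℚ, x = (q : ℝ) ∧ 0 < (q : ℝ) ∧ t < S (q : ℝ) ω}

/-- right limit of the subordinator -/
private noncomputable def Sp (S : ℝ → Ω → ℝ) (r : ℝ) (ω : Ω) : ℝ :=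
  ⨅ n : ℕ, S (r + ((n : ℝ) + 1)⁻¹) ω

private def good (S : ℝ → Ω → ℝ) (ω : Ω) : Prop :=
  S 0 ω = 0 ∧ Monotone (fun r => S r ω) ∧ ∀ t : ℝ, ∃ n : ℕ, t < S n ω

variable {S : ℝ → Ω → ℝ} {ω : Ω}

private lemma lqSet_bdd {t : ℝ} :
    BddBelow {x : ℝ | ∃ q : ℚ, x = (q : ℝ) ∧ 0 < (q : ℝ) ∧ t < S (q : ℝ) ω} := by
  refine ⟨0, ?_⟩
  rintro x ⟨q, rfl, hq, -⟩
  exact hq.le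

private lemma lq_lt_iff (t : ℝ) (ω : Ω) (b : ℝ) :
    Lq S t ω < b ↔ ((0 < b ∧ ∀ q : ℚ, 0 < (q : ℝ) → S (q : ℝ) ω ≤ t) ∨
      ∃ q : ℚ, 0 < (q : ℝ) ∧ t < S (q : ℝ) ω ∧ (q : ℝ) < b) := by
  set V := {x : ℝ | ∃ q : ℚ, x = (q : ℝ) ∧ 0 < (q : ℝ) ∧ t < S (q : ℝ) ω} with hV
  by_cases hne : V.Nonempty
  · rw [show Lq S t ω = sInf V from rfl, csInf_lt_iff lqSet_bdd hne]
    constructor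
    · rintro ⟨x, ⟨q, rfl, hq, hSq⟩, hxb⟩
      exact Or.inr ⟨q, hq, hSq, hxb⟩
    · rintro (⟨hb, hall⟩ | ⟨q, hq, hSq, hqb⟩)
      · obtain ⟨x, q, rfl, hq, hSq⟩ := hne
        exact absurd (hall q hq) (not_le.2 hSq)
      · exact ⟨q, ⟨q, rfl, hq, hSq⟩, hqb⟩
  · rw [Set.not_nonempty_iff_eq_empty] at hne
    rw [show Lq S t ω = sInf V from rfl, hne, Real.sInf_empty]
    constructor
    · intro hb
      refine Or.inl ⟨hb, fun q hq => ?_⟩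
      by_contra h
      exact (Set.eq_empty_iff_forall_notMem.1 hne (q : ℝ)) ⟨q, rfl, hq, not_le.1 h⟩
    · rintro (⟨hb, -⟩ | ⟨q, hq, hSq, hqb⟩)
      · exact hb
      · exact ((Set.eq_empty_iff_forall_notMem.1 hne (q : ℝ)) ⟨q, rfl, hq, hSq⟩).elim

private lemma lq_meas (hSmeas : ∀ r, Measurable (S r)) :
    Measurable fun p : ℝ × Ω => Lq S p.1 p.2 := by
  apply measurable_of_Iio
  intro b
  have hset : (fun p : ℝ × Ω => Lq S p.1 p.2) ⁻¹' Iio b =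
      ({p : ℝ × Ω | 0 < b} ∩ ⋂ q : ℚ, {p : ℝ × Ω | 0 < (q : ℝ) → S (q : ℝ) p.2 ≤ p.1}) ∪
        ⋃ q : ℚ, ({p : ℝ × Ω | 0 < (q : ℝ)} ∩
          ({p : ℝ × Ω | p.1 < S (q : ℝ) p.2} ∩ {p : ℝ × Ω | (q : ℝ) < b})) := by
    ext p
    simp only [mem_preimage, mem_Iio, lq_lt_iff, Set.mem_union, Set.mem_inter_iff,
      Set.mem_iInter, Set.mem_iUnion, Set.mem_setOf_eq]
  rw [hset]
  refine MeasurableSet.union (MeasurableSet.inter (MeasurableSet.const _)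
    (MeasurableSet.iInter fun q => ?_)) (MeasurableSet.iUnion fun q => ?_)
  · by_cases hq : 0 < (q : ℝ)
    · simp only [hq, true_implies]
      exact measurableSet_le ((hSmeas _).comp measurable_snd) measurable_fst
    · simp only [hq, false_implies, Set.setOf_true]
      exact MeasurableSet.univ
  · exact (MeasurableSet.const _).inter
      ((measurableSet_lt measurable_fst ((hSmeas _).comp measurable_snd)).inter
        (MeasurableSet.const _))

private lemma inv_succ_anti : Antitone fun n : ℕ => ((n : ℝ) + 1)⁻¹ := by
  intro n m hnm
  have h1 : (0 : ℝ) < (n : ℝ) + 1 := by positivity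
  have h2 : ((n : ℝ) + 1) ≤ (m : ℝ) + 1 := by
    have : (n : ℝ) ≤ (m : ℝ) := Nat.cast_le.2 hnm
    linarith
  exact inv_anti₀ h1 h2

private lemma good.Une (h : good S ω) (t : ℝ) :
    {r : ℝ | 0 < r ∧ t < S r ω}.Nonempty := by
  obtain ⟨n, hn⟩ := h.2.2 t
  exact ⟨(n : ℝ) + 1, by positivity, lt_of_lt_of_le hn (h.2.1 (by linarith))⟩

private lemma Ubdd {t : ℝ} : BddBelow {r : ℝ | 0 < r ∧ t < S r ω} :=
  ⟨0, fun x hx => hx.1.le⟩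

private lemma good.Snonneg (h : good S ω) {r : ℝ} (hr : 0 ≤ r) : 0 ≤ S r ω := by
  simpa [h.1] using h.2.1 hr

private lemma good.L0 (h : good S ω) (t : ℝ) :
    0 ≤ sInf {r : ℝ | 0 < r ∧ t < S r ω} :=
  le_csInf (h.Une t) fun x hx => hx.1.le

private lemma good.lt_iff (h : good S ω) {t r : ℝ} (hr : 0 ≤ r) :
    r < sInf {r' : ℝ | 0 < r' ∧ t < S r' ω} ↔ ∃ r' > r, S r' ω ≤ t := by
  constructor
  · intro hlt
    set m := sInf {r' : ℝ | 0 < r' ∧ t < S r' ω} with hm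
    refine ⟨(r + m) / 2, by linarith, ?_⟩
    by_contra hcon
    push_neg at hcon
    have hmem : (r + m) / 2 ∈ {r' : ℝ | 0 < r' ∧ t < S r' ω} := ⟨by linarith, hcon⟩
    have := csInf_le Ubdd hmem
    rw [← hm] at this
    linarith
  · rintro ⟨r', hr', hS⟩
    have hle : r' ≤ sInf {r'' : ℝ | 0 < r'' ∧ t < S r'' ω} := by
      refine le_csInf (h.Une t) fun u hu => ?_
      by_contra hc
      push_neg at hc
      exact absurd (le_trans (h.2.1 hc.le) hS) (not_le.2 hu.2)
    linarith

private lemma good.lq_eq (h : good S ω) (t : ℝ) :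
    Lq S t ω = sInf {r : ℝ | 0 < r ∧ t < S r ω} := by
  set U := {r : ℝ | 0 < r ∧ t < S r ω} with hU
  set V := {x : ℝ | ∃ q : ℚ, x = (q : ℝ) ∧ 0 < (q : ℝ) ∧ t < S (q : ℝ) ω} with hV
  have hVU : V ⊆ U := by
    rintro x ⟨q, rfl, hq, hSq⟩
    exact ⟨hq, hSq⟩
  have hVne : V.Nonempty := by
    obtain ⟨u, hu0, hut⟩ := h.Une t
    obtain ⟨q, hq⟩ := exists_rat_gt u
    exact ⟨(q : ℝ), q, rfl, hu0.trans hq, lt_of_lt_of_le hut (h.2.1 hq.le)⟩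
  refine le_antisymm ?_ (csInf_le_csInf Ubdd hVne hVU)
  refine le_of_forall_pos_le_add fun ε hε => ?_
  obtain ⟨u, hu, hult⟩ := exists_lt_of_csInf_lt (h.Une t)
    (lt_add_of_pos_right (sInf U) (half_pos hε))
  obtain ⟨q, hq1, hq2⟩ := exists_rat_btwn (lt_add_of_pos_right u (half_pos hε))
  have hqV : (q : ℝ) ∈ V := ⟨q, rfl, hu.1.trans hq1, lt_of_lt_of_le hu.2 (h.2.1 hq1.le)⟩
  have := csInf_le lqSet_bdd hqV
  have : Lq S t ω ≤ (q : ℝ) := this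
  linarith

private lemma good.lq_char (h : good S ω) {r : ℝ} (hr : 0 ≤ r) (t : ℝ) :
    r < Lq S t ω ↔ ∃ r' > r, S r' ω ≤ t := by
  rw [h.lq_eq]
  exact h.lt_iff hr

private lemma good.lq_nonneg (h : good S ω) (t : ℝ) : 0 ≤ Lq S t ω := by
  rw [h.lq_eq]; exact h.L0 t

private lemma spBdd (h : good S ω) {r : ℝ} (hr : 0 ≤ r) :
    BddBelow (Set.range fun n : ℕ => S (r + ((n : ℝ) + 1)⁻¹) ω) := by
  refine ⟨0, ?_⟩
  rintro x ⟨n, rfl⟩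
  exact h.Snonneg (by positivity)

private lemma good.sp_nonneg (h : good S ω) {r : ℝ} (hr : 0 ≤ r) : 0 ≤ Sp S r ω :=
  le_ciInf fun n => h.Snonneg (by positivity)

private lemma good.sp_lt (h : good S ω) {r : ℝ} (hr : 0 ≤ r) {t : ℝ}
    (ht : Sp S r ω < t) : r < Lq S t ω := by
  obtain ⟨n, hn⟩ := exists_lt_of_ciInf_lt ht
  exact (h.lq_char hr t).2 ⟨r + ((n : ℝ) + 1)⁻¹, lt_add_of_pos_right r (by positivity), hn.le⟩

private lemma good.sp_le (h : good S ω) {r : ℝ} (hr : 0 ≤ r) {t : ℝ}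
    (ht : r < Lq S t ω) : Sp S r ω ≤ t := by
  obtain ⟨r', hr', hS⟩ := (h.lq_char hr t).1 ht
  obtain ⟨n, hn⟩ := exists_nat_gt (r' - r)⁻¹
  have hpos : 0 < r' - r := by linarith
  have hinv : ((n : ℝ) + 1)⁻¹ < r' - r := by
    rw [inv_lt_comm₀ (by positivity) hpos]
    calc (r' - r)⁻¹ < (n : ℝ) := hn
    _ < (n : ℝ) + 1 := by linarith
  calc Sp S r ω ≤ S (r + ((n : ℝ) + 1)⁻¹) ω := ciInf_le (spBdd h hr) n
  _ ≤ S r' ω := h.2.1 (by linarith)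
  _ ≤ t := hS

end Stmt2Aux

/-- If `S` is a subordinator with unbounded Laplace exponent `φ`
and inverse `L`, then for every `γ ∈ ℝ` and every `λ > 0` with `φ(λ) > γ ∨ 0`
(equivalently, `λ > φ⁻¹(γ ∨ 0)` since `φ` is increasing),
`∫_0^∞ e^{-λ t} E[e^{γ L_t}] dt = φ(λ) / (λ (φ(λ) - γ))`. -/
theorem stmt2 {Ω : Type*} [MeasurableSpace Ω] (P : Measure Ω) [IsProbabilityMeasure P]
    (S : ℝ → Ω → ℝ) (φ : ℝ → ℝ)
    (hSmeas : ∀ r, Measurable (S r))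
    (hS0 : ∀ᵐ ω ∂P, S 0 ω = 0)
    (hSmono : ∀ᵐ ω ∂P, Monotone fun r => S r ω)
    (hLap : ∀ lam > (0 : ℝ), ∀ r ≥ (0 : ℝ),
      ∫ ω, Real.exp (-(lam * S r ω)) ∂P = Real.exp (-(r * φ lam)))
    (hφmono : Monotone φ)
    (hφunbdd : Tendsto φ atTop atTop)
    (L : ℝ → Ω → ℝ)
    (hL : ∀ t ω, L t ω = sInf {r : ℝ | 0 < r ∧ t < S r ω}) :
    ∀ γ : ℝ, ∀ lam > (0 : ℝ), max γ 0 < φ lam →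
      ∫ t in Set.Ioi (0 : ℝ), Real.exp (-(lam * t)) * (∫ ω, Real.exp (γ * L t ω) ∂P)
        = φ lam / (lam * (φ lam - γ)) := by
  intro γ lam hlam hmax
  set c : ℝ := φ lam with hc_def
  have hc : 0 < c := lt_of_le_of_lt (le_max_right γ 0) hmax
  have hγc : γ < c := lt_of_le_of_lt (le_max_left γ 0) hmax
  have hcγ : 0 < c - γ := sub_pos.2 hγc
  have hlam0 : lam ≠ 0 := ne_of_gt hlam
  -- basic facts
  have hSexpmeas : ∀ r : ℝ, Measurable fun ω => Real.exp (-(lam * S r ω)) := fun r =>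
    (((hSmeas r).const_mul lam).neg).exp
  have hSnn : ∀ᵐ ω ∂P, ∀ r ≥ (0 : ℝ), 0 ≤ S r ω := by
    filter_upwards [hS0, hSmono] with ω h0 hm r hr
    calc (0 : ℝ) = S 0 ω := h0.symm
    _ ≤ S r ω := hm hr
  have hexpint : ∀ r ≥ (0 : ℝ), Integrable (fun ω => Real.exp (-(lam * S r ω))) P := by
    intro r hr
    refine (integrable_const (1 : ℝ)).mono' (hSexpmeas r).aestronglyMeasurable ?_
    filter_upwards [hSnn] with ω hω
    rw [Real.norm_eq_abs, abs_of_pos (Real.exp_pos _)]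
    exact Real.exp_le_one_iff.2 (neg_nonpos.2 (mul_nonneg hlam.le (hω r hr)))
  have hlapE : ∀ r ≥ (0 : ℝ), ∫⁻ ω, ENNReal.ofReal (Real.exp (-(lam * S r ω))) ∂P
      = ENNReal.ofReal (Real.exp (-(r * c))) := by
    intro r hr
    rw [← ofReal_integral_eq_lintegral_ofReal (hexpint r hr)
      (ae_of_all _ fun ω => (Real.exp_pos _).le), hLap lam hlam r hr]
  -- Chebyshev bound
  have cheb : ∀ r ≥ (0 : ℝ), ∀ t : ℝ, P {ω | S r ω ≤ t}
      ≤ ENNReal.ofReal (Real.exp (lam * t) * Real.exp (-(r * c))) := by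
    intro r hr t
    have hset : MeasurableSet {ω | S r ω ≤ t} := measurableSet_le (hSmeas r) measurable_const
    rw [← lintegral_indicator_one hset]
    have h2 : ∀ ω, {ω | S r ω ≤ t}.indicator (fun _ => (1 : ℝ≥0∞)) ω
        ≤ ENNReal.ofReal (Real.exp (lam * t)) * ENNReal.ofReal (Real.exp (-(lam * S r ω))) := by
      intro ω
      rw [← ENNReal.ofReal_mul (Real.exp_nonneg _), ← Real.exp_add]
      by_cases hω : ω ∈ {ω | S r ω ≤ t}
      · rw [Set.indicator_of_mem hω]
        have hω' : S r ω ≤ t := hω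
        have : lam * S r ω ≤ lam * t := mul_le_mul_of_nonneg_left hω' hlam.le
        refine ENNReal.one_le_ofReal.2 ?_
        calc (1 : ℝ) = Real.exp 0 := by rw [Real.exp_zero]
        _ ≤ Real.exp (lam * t + -(lam * S r ω)) := Real.exp_le_exp.2 (by linarith)
      · rw [Set.indicator_of_notMem hω]
        exact zero_le'
    calc ∫⁻ ω, {ω | S r ω ≤ t}.indicator (fun _ => (1 : ℝ≥0∞)) ω ∂P
        ≤ ∫⁻ ω, ENNReal.ofReal (Real.exp (lam * t))
          * ENNReal.ofReal (Real.exp (-(lam * S r ω))) ∂P := lintegral_mono h2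
    _ = ENNReal.ofReal (Real.exp (lam * t))
          * ∫⁻ ω, ENNReal.ofReal (Real.exp (-(lam * S r ω))) ∂P :=
        lintegral_const_mul' _ _ ENNReal.ofReal_ne_top
    _ = _ := by rw [hlapE r hr, ENNReal.ofReal_mul (Real.exp_nonneg _)]
  -- the good set
  have hub : ∀ᵐ ω ∂P, ∀ m : ℕ, ∃ n : ℕ, (m : ℝ) < S n ω := by
    rw [ae_all_iff]
    intro m
    rw [ae_iff]
    have hsub : ∀ n : ℕ, {ω | ¬∃ n : ℕ, (m : ℝ) < S n ω} ⊆ {ω | S (n : ℝ) ω ≤ (m : ℝ)} := by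
      intro n ω hω
      push_neg at hω
      exact hω n
    have hle : ∀ n : ℕ, P {ω | ¬∃ n : ℕ, (m : ℝ) < S n ω}
        ≤ ENNReal.ofReal (Real.exp (lam * m) * Real.exp (-((n : ℝ) * c))) := fun n =>
      le_trans (measure_mono (hsub n)) (cheb n (Nat.cast_nonneg n) m)
    have htend : Tendsto (fun n : ℕ =>
        ENNReal.ofReal (Real.exp (lam * m) * Real.exp (-((n : ℝ) * c)))) atTop (nhds 0) := by
      rw [← ENNReal.ofReal_zero]
      apply ENNReal.tendsto_ofReal
      rw [show (0 : ℝ) = Real.exp (lam * m) * 0 by ring]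
      apply Tendsto.const_mul
      apply Real.tendsto_exp_atBot.comp
      exact tendsto_neg_atTop_atBot.comp
        (Tendsto.atTop_mul_const hc tendsto_natCast_atTop_atTop)
    have := ge_of_tendsto' htend hle
    exact le_antisymm this zero_le'
  have hgood : ∀ᵐ ω ∂P, good S ω := by
    filter_upwards [hS0, hSmono, hub] with ω h0 hm hu
    refine ⟨h0, hm, fun t => ?_⟩
    obtain ⟨m, hmt⟩ := exists_nat_gt t
    obtain ⟨n, hn⟩ := hu m
    exact ⟨n, hmt.trans hn⟩
  -- measurability of Lq
  have hLqm : Measurable fun p : ℝ × Ω => Lq S p.1 p.2 := lq_meas hSmeas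
  have hLqmt : ∀ t : ℝ, Measurable fun ω => Lq S t ω := fun t =>
    hLqm.comp (measurable_prodMk_left)
  have hLqset : ∀ t r : ℝ, MeasurableSet {ω | r < Lq S t ω} := fun t r =>
    measurableSet_lt measurable_const (hLqmt t)
  -- γ = 0 case
  rcases eq_or_ne γ 0 with rfl | hγ0
  · have h1 : ∀ t : ℝ, (∫ ω, Real.exp (0 * L t ω) ∂P) = 1 := by
      intro t
      simp [Real.exp_zero]
    rw [setIntegral_congr_fun measurableSet_Ioi
      (fun t _ => by simp only [h1 t, mul_one] :
        Set.EqOn (fun t => Real.exp (-(lam * t)) * ∫ ω, Real.exp (0 * L t ω) ∂P)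
          (fun t => Real.exp (-(lam * t))) (Ioi 0))]
    rw [exp_val 0 hlam]
    rw [sub_zero]
    rw [mul_zero, neg_zero, Real.exp_zero]
    field_simp
  -- main case : γ ≠ 0
  -- the function X
  set X : ℝ → ℝ≥0∞ := fun t =>
    ∫⁻ r in Ioi (0 : ℝ), ENNReal.ofReal (Real.exp (γ * r)) * P {ω | r < Lq S t ω} with hX_def
  -- joint measurability of the kernel
  have hNm : Measurable fun p : ℝ × ℝ => P {ω | p.2 < Lq S p.1 ω} := by
    have hbig : MeasurableSet {q : (ℝ × ℝ) × Ω | q.1.2 < Lq S q.1.1 q.2} :=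
      measurableSet_lt (measurable_fst.snd)
        (hLqm.comp ((measurable_fst.fst).prodMk measurable_snd))
    have := Measurable.lintegral_prod_right' (ν := P)
      ((measurable_const (a := (1 : ℝ≥0∞))).indicator hbig :
        Measurable fun q : (ℝ × ℝ) × Ω => {q : (ℝ × ℝ) × Ω | q.1.2 < Lq S q.1.1 q.2}.indicator
          (fun _ => (1 : ℝ≥0∞)) q)
    have heq : (fun p : ℝ × ℝ => P {ω | p.2 < Lq S p.1 ω}) = fun p : ℝ × ℝ =>
        ∫⁻ ω, {q : (ℝ × ℝ) × Ω | q.1.2 < Lq S q.1.1 q.2}.indicator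
          (fun _ => (1 : ℝ≥0∞)) (p, ω) ∂P := by
      funext p
      have : (fun ω => {q : (ℝ × ℝ) × Ω | q.1.2 < Lq S q.1.1 q.2}.indicator
          (fun _ => (1 : ℝ≥0∞)) (p, ω)) = fun ω =>
          {ω : Ω | p.2 < Lq S p.1 ω}.indicator (fun _ => (1 : ℝ≥0∞)) ω := by
        funext ω
        simp only [Set.indicator_apply, Set.mem_setOf_eq]
      rw [this, lintegral_indicator_const (hLqset _ _), one_mul]
    rw [heq]
    exact this
  have hXmeas : Measurable X := by
    have h := Measurable.lintegral_prod_right' (ν := volume.restrict (Ioi (0 : ℝ)))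
      (f := fun p : ℝ × ℝ => ENNReal.ofReal (Real.exp (γ * p.2)) * P {ω | p.2 < Lq S p.1 ω})
      (((Real.measurable_exp.comp (measurable_snd.const_mul γ)).ennreal_ofReal).mul hNm)
    rw [hX_def]
    exact h
  -- measure comparison bound
  have hPle : ∀ t r : ℝ, 0 < r → P {ω | r < Lq S t ω}
      ≤ ENNReal.ofReal (Real.exp (lam * t) * Real.exp (-(r * c))) := by
    intro t r hr0
    refine le_trans (measure_mono_ae ?_) (cheb r hr0.le t)
    filter_upwards [hgood] with ω hg'
    show ω ∈ {ω | r < Lq S t ω} → ω ∈ {ω | S r ω ≤ t}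
    intro hmem
    obtain ⟨r', hr', hS⟩ := (hg'.lq_char hr0.le t).1 hmem
    exact le_trans (hg'.2.1 hr'.le) hS
  -- X is finite
  have hXbound : ∀ t : ℝ, X t ≠ ⊤ := by
    intro t
    have h1 : X t ≤ ∫⁻ r in Ioi (0 : ℝ), ENNReal.ofReal (Real.exp (lam * t))
        * ENNReal.ofReal (Real.exp (-((c - γ) * r))) := by
      apply lintegral_mono_ae
      refine (ae_restrict_iff' measurableSet_Ioi).2 (ae_of_all _ fun r hr => ?_)
      calc ENNReal.ofReal (Real.exp (γ * r)) * P {ω | r < Lq S t ω}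
          ≤ ENNReal.ofReal (Real.exp (γ * r)) * ENNReal.ofReal
            (Real.exp (lam * t) * Real.exp (-(r * c))) := mul_le_mul_right (hPle t r hr) _
      _ = ENNReal.ofReal (Real.exp (lam * t)) * ENNReal.ofReal (Real.exp (-((c - γ) * r))) := by
          rw [← ENNReal.ofReal_mul (Real.exp_nonneg _), ← ENNReal.ofReal_mul (Real.exp_nonneg _)]
          congr 1
          simp only [← Real.exp_add]
          congr 1
          ring
    have h2 : ∫⁻ r in Ioi (0 : ℝ), ENNReal.ofReal (Real.exp (lam * t))
        * ENNReal.ofReal (Real.exp (-((c - γ) * r)))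
        = ENNReal.ofReal (Real.exp (lam * t))
          * ENNReal.ofReal (Real.exp (-((c - γ) * 0)) / (c - γ)) := by
      rw [lintegral_const_mul' _ _ ENNReal.ofReal_ne_top, exp_lval 0 hcγ]
    exact ne_top_of_le_ne_top
      (by rw [h2]; exact ENNReal.mul_ne_top ENNReal.ofReal_ne_top ENNReal.ofReal_ne_top) h1
  -- swap to get the layer-cake formula per t
  have hYX : ∀ t : ℝ, ∫⁻ ω, ENNReal.ofReal (∫ r in Ioo 0 (L t ω), Real.exp (γ * r)) ∂P
      = X t := by
    intro t
    set g : ℝ × Ω → ℝ≥0∞ := fun p =>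
      {p : ℝ × Ω | p.1 < Lq S t p.2}.indicator
        (fun p => ENNReal.ofReal (Real.exp (γ * p.1))) p with hg_def
    have hgmeas : Measurable g :=
      ((Real.measurable_exp.comp (measurable_fst.const_mul γ)).ennreal_ofReal).indicator
        (measurableSet_lt measurable_fst ((hLqmt t).comp measurable_snd))
    have hptw : ∀ᵐ ω ∂P, ENNReal.ofReal (∫ r in Ioo 0 (L t ω), Real.exp (γ * r))
        = ∫⁻ r in Ioi (0 : ℝ), g (r, ω) := by
      filter_upwards [hgood] with ω hg'
      have hLeq : L t ω = Lq S t ω := by rw [hL t ω, hg'.lq_eq]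
      have hint : IntegrableOn (fun r => Real.exp (γ * r)) (Ioo 0 (L t ω)) := by
        refine IntegrableOn.mono_set ?_ Ioo_subset_Icc_self
        exact (Real.continuous_exp.comp (continuous_const.mul continuous_id)).integrableOn_Icc
      rw [ofReal_integral_eq_lintegral_ofReal hint (ae_of_all _ fun r => (Real.exp_pos _).le)]
      have h1 : ∫⁻ r in Ioi (0 : ℝ),
          (Iio (L t ω)).indicator (fun r => ENNReal.ofReal (Real.exp (γ * r))) r
          = ∫⁻ r in Ioo 0 (L t ω), ENNReal.ofReal (Real.exp (γ * r)) := by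
        rw [lintegral_indicator measurableSet_Iio, Measure.restrict_restrict measurableSet_Iio,
          Set.inter_comm, Set.Ioi_inter_Iio]
      rw [← h1]
      refine lintegral_congr fun r => ?_
      simp only [hg_def, Set.indicator_apply, Set.mem_Iio, Set.mem_setOf_eq, hLeq]
    rw [lintegral_congr_ae hptw]
    have hswapmeas : Measurable fun p : Ω × ℝ => g (p.2, p.1) := hgmeas.comp measurable_swap
    rw [lintegral_lintegral_swap (f := fun ω r => g (r, ω)) hswapmeas.aemeasurable]
    refine lintegral_congr fun r => ?_
    have h2 : (fun ω => g (r, ω)) = fun ω =>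
        {ω : Ω | r < Lq S t ω}.indicator (fun _ => ENNReal.ofReal (Real.exp (γ * r))) ω := by
      funext ω
      simp only [hg_def, Set.indicator_apply, Set.mem_setOf_eq]
    rw [h2, lintegral_indicator_const (hLqset t r)]
  -- the per-t value of the inner expectation
  have hS1 : ∀ t : ℝ, (∫ ω, Real.exp (γ * L t ω) ∂P) = 1 + γ * (X t).toReal := by
    intro t
    set Y : Ω → ℝ := fun ω => ∫ r in Ioo 0 (L t ω), Real.exp (γ * r) with hY_def
    have hkey : ∀ᵐ ω ∂P, γ * Y ω = Real.exp (γ * L t ω) - 1 ∧ L t ω = Lq S t ω := by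
      filter_upwards [hgood] with ω hg'
      have hLeq : L t ω = Lq S t ω := by rw [hL t ω, hg'.lq_eq]
      have hl0 : 0 ≤ L t ω := by rw [hLeq]; exact hg'.lq_nonneg t
      refine ⟨?_, hLeq⟩
      have h1 : Y ω = ∫ r in (0:ℝ)..(L t ω), Real.exp (γ * r) := by
        rw [hY_def, intervalIntegral.integral_of_le hl0, integral_Ioc_eq_integral_Ioo]
      rw [h1, intervalIntegral.mul_integral_comp_mul_left, mul_zero, integral_exp,
        Real.exp_zero]
    have hYmeas : AEStronglyMeasurable Y P := by
      have hm : Measurable fun ω => (Real.exp (γ * Lq S t ω) - 1) / γ :=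
        ((((hLqmt t).const_mul γ).exp).sub measurable_const).div_const γ
      refine hm.aestronglyMeasurable.congr ?_
      filter_upwards [hkey] with ω h
      rw [← h.2, ← h.1, mul_comm, mul_div_assoc, div_self hγ0, mul_one]
    have hYnn : 0 ≤ᵐ[P] Y := ae_of_all _ fun ω =>
      setIntegral_nonneg measurableSet_Ioo fun r _ => (Real.exp_pos _).le
    have hYlint : ∫⁻ ω, ENNReal.ofReal (Y ω) ∂P = X t := hYX t
    have hYint : Integrable Y P :=
      ⟨hYmeas, (hasFiniteIntegral_iff_ofReal hYnn).2 (by rw [hYlint]; exact (hXbound t).lt_top)⟩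
    have heq1 : (fun ω => Real.exp (γ * L t ω)) =ᵐ[P] fun ω => 1 + γ * Y ω := by
      filter_upwards [hkey] with ω h
      have := h.1
      linarith
    calc ∫ ω, Real.exp (γ * L t ω) ∂P = ∫ ω, (1 + γ * Y ω) ∂P := integral_congr_ae heq1
    _ = 1 + γ * ∫ ω, Y ω ∂P := by
        rw [integral_add (integrable_const 1) (hYint.const_mul γ), integral_const,
          integral_const_mul]
        simp
    _ = 1 + γ * (X t).toReal := by
        rw [integral_eq_lintegral_of_nonneg_ae hYnn hYmeas, hYlint]
  -- expectation of the right limit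
  have hSpE : ∀ r : ℝ, 0 ≤ r → ∫⁻ ω, ENNReal.ofReal (Real.exp (-(lam * Sp S r ω))) ∂P
      = ENNReal.ofReal (Real.exp (-(r * c))) := by
    intro r hr
    have hptw : ∀ᵐ ω ∂P, (ENNReal.ofReal (Real.exp (-(lam * Sp S r ω)))
        = ⨆ n : ℕ, ENNReal.ofReal (Real.exp (-(lam * S (r + ((n:ℝ)+1)⁻¹) ω)))) ∧
        Monotone fun n : ℕ => ENNReal.ofReal (Real.exp (-(lam * S (r + ((n:ℝ)+1)⁻¹) ω))) := by
      filter_upwards [hgood] with ω hg'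
      have hanti : Antitone fun n : ℕ => S (r + ((n:ℝ)+1)⁻¹) ω := fun n m hnm => by
        have := inv_succ_anti hnm
        exact hg'.2.1 (by simpa using add_le_add_left this r)
      have hmono : Monotone fun n : ℕ =>
          ENNReal.ofReal (Real.exp (-(lam * S (r + ((n:ℝ)+1)⁻¹) ω))) := by
        intro n m hnm
        apply ENNReal.ofReal_le_ofReal
        apply Real.exp_le_exp.2
        have h1 := mul_le_mul_of_nonneg_left (hanti hnm) hlam.le
        linarith
      refine ⟨?_, hmono⟩
      have htend : Tendsto (fun n : ℕ => S (r + ((n:ℝ)+1)⁻¹) ω) atTop (nhds (Sp S r ω)) :=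
        tendsto_atTop_ciInf hanti (spBdd hg' hr)
      have htend2 : Tendsto
          (fun n : ℕ => ENNReal.ofReal (Real.exp (-(lam * S (r + ((n:ℝ)+1)⁻¹) ω))))
          atTop (nhds (ENNReal.ofReal (Real.exp (-(lam * Sp S r ω))))) :=
        (ENNReal.continuous_ofReal.tendsto _).comp
          ((Real.continuous_exp.tendsto _).comp ((htend.const_mul lam).neg))
      exact (iSup_eq_of_tendsto hmono htend2).symm
    rw [lintegral_congr_ae (hptw.mono fun ω h => h.1),
      lintegral_iSup' (fun n => ((hSexpmeas _).ennreal_ofReal).aemeasurable)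
        (hptw.mono fun ω h => h.2)]
    calc ⨆ n : ℕ, ∫⁻ ω, ENNReal.ofReal (Real.exp (-(lam * S (r + ((n:ℝ)+1)⁻¹) ω))) ∂P
        = ⨆ n : ℕ, ENNReal.ofReal (Real.exp (-((r + ((n:ℝ)+1)⁻¹) * c))) := by
          refine iSup_congr fun n => ?_
          exact hlapE _ (by positivity)
    _ = ENNReal.ofReal (Real.exp (-(r * c))) := by
        refine iSup_eq_of_tendsto ?_ ?_
        · intro n m hnm
          apply ENNReal.ofReal_le_ofReal
          apply Real.exp_le_exp.2
          have h1 := inv_succ_anti hnm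
          nlinarith [hc.le]
        · refine (ENNReal.continuous_ofReal.tendsto _).comp
            ((Real.continuous_exp.tendsto _).comp ?_)
          have h0 : Tendsto (fun n : ℕ => ((n:ℝ)+1)⁻¹) atTop (nhds 0) := by
            simpa [one_div] using tendsto_one_div_add_atTop_nhds_zero_nat (𝕜 := ℝ)
          have h2 := ((h0.const_add r).mul_const c).neg
          simpa using h2
  -- the t-integral for fixed r
  have hS3 : ∀ r : ℝ, r ∈ Ioi (0:ℝ) →
      ∫⁻ t in Ioi (0:ℝ), ENNReal.ofReal (Real.exp (-(lam * t))) * P {ω | r < Lq S t ω}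
        = ENNReal.ofReal (Real.exp (-(r * c)) * (1 / lam)) := by
    intro r hr
    have hr0 : (0:ℝ) < r := hr
    set g2 : ℝ × Ω → ℝ≥0∞ := fun p =>
      {p : ℝ × Ω | r < Lq S p.1 p.2}.indicator
        (fun p => ENNReal.ofReal (Real.exp (-(lam * p.1)))) p with hg2_def
    have hg2meas : Measurable g2 :=
      ((((measurable_fst.const_mul lam).neg).exp).ennreal_ofReal).indicator
        (measurableSet_lt measurable_const hLqm)
    have hstep1 : ∀ t : ℝ, ENNReal.ofReal (Real.exp (-(lam * t))) * P {ω | r < Lq S t ω}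
        = ∫⁻ ω, g2 (t, ω) ∂P := by
      intro t
      have h2 : (fun ω => g2 (t, ω)) = fun ω =>
          {ω : Ω | r < Lq S t ω}.indicator
            (fun _ => ENNReal.ofReal (Real.exp (-(lam * t)))) ω := by
        funext ω
        simp only [hg2_def, Set.indicator_apply, Set.mem_setOf_eq]
      rw [h2, lintegral_indicator_const (hLqset t r)]
    rw [lintegral_congr fun t => hstep1 t, lintegral_lintegral_swap hg2meas.aemeasurable]
    have hinner : ∀ᵐ ω ∂P, ∫⁻ t in Ioi (0:ℝ), g2 (t, ω)
        = ENNReal.ofReal (Real.exp (-(lam * Sp S r ω)) * (1 / lam)) := by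
      filter_upwards [hgood] with ω hg'
      have ha0 : 0 ≤ Sp S r ω := hg'.sp_nonneg hr0.le
      have hIoi : ∫⁻ t in Ioi (0:ℝ),
          (Ioi (Sp S r ω)).indicator (fun t => ENNReal.ofReal (Real.exp (-(lam * t)))) t
          = ENNReal.ofReal (Real.exp (-(lam * Sp S r ω)) / lam) := by
        rw [lintegral_indicator measurableSet_Ioi, Measure.restrict_restrict measurableSet_Ioi,
          Set.Ioi_inter_Ioi, max_eq_left ha0, exp_lval _ hlam]
      have hIci : ∫⁻ t in Ioi (0:ℝ),
          (Ici (Sp S r ω)).indicator (fun t => ENNReal.ofReal (Real.exp (-(lam * t)))) t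
          = ENNReal.ofReal (Real.exp (-(lam * Sp S r ω)) / lam) := by
        rw [lintegral_indicator measurableSet_Ici, Measure.restrict_restrict measurableSet_Ici]
        refine le_antisymm ?_ ?_
        · refine le_trans (lintegral_mono_set Set.inter_subset_left) ?_
          rw [← MeasureTheory.restrict_Ioi_eq_restrict_Ici, exp_lval _ hlam]
        · refine le_trans (le_of_eq (exp_lval _ hlam).symm) ?_
          refine lintegral_mono_set fun t ht => ?_
          exact ⟨Set.mem_Ici.2 (le_of_lt ht), Set.mem_Ioi.2 (lt_of_le_of_lt ha0 ht)⟩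
      have hval : ENNReal.ofReal (Real.exp (-(lam * Sp S r ω)) * (1 / lam))
          = ENNReal.ofReal (Real.exp (-(lam * Sp S r ω)) / lam) := by
        rw [mul_one_div]
      rw [hval]
      refine le_antisymm ?_ ?_
      · rw [← hIci]
        refine lintegral_mono fun t => ?_
        by_cases hmem : (t, ω) ∈ {p : ℝ × Ω | r < Lq S p.1 p.2}
        · have hta : t ∈ Ici (Sp S r ω) := hg'.sp_le hr0.le hmem
          simp only [hg2_def]
          rw [Set.indicator_of_mem hmem, Set.indicator_of_mem hta]
        · simp only [hg2_def]
          rw [Set.indicator_of_notMem hmem]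
          exact zero_le'
      · rw [← hIoi]
        refine lintegral_mono fun t => ?_
        by_cases ht : t ∈ Ioi (Sp S r ω)
        · rw [Set.indicator_of_mem ht]
          have hmem : (t, ω) ∈ {p : ℝ × Ω | r < Lq S p.1 p.2} := hg'.sp_lt hr0.le ht
          simp only [hg2_def]
          rw [Set.indicator_of_mem hmem]
        · rw [Set.indicator_of_notMem ht]
          exact zero_le'
    rw [lintegral_congr_ae hinner]
    simp_rw [ENNReal.ofReal_mul (Real.exp_nonneg _)]
    rw [lintegral_mul_const' _ _ ENNReal.ofReal_ne_top, hSpE r hr0.le]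
  -- final assembly
  have hintegrand : ∀ t : ℝ, Real.exp (-(lam * t)) * (∫ ω, Real.exp (γ * L t ω) ∂P)
      = Real.exp (-(lam * t)) + γ * (Real.exp (-(lam * t)) * (X t).toReal) := by
    intro t
    rw [hS1 t]; ring
  rw [integral_congr_ae (ae_of_all _ hintegrand)]
  set W : ℝ → ℝ := fun t => Real.exp (-(lam * t)) * (X t).toReal with hW_def
  have hWmeas : Measurable W :=
    (((measurable_id.const_mul lam).neg).exp).mul hXmeas.ennreal_toReal
  have hWnn : 0 ≤ᵐ[volume.restrict (Ioi (0:ℝ))] W :=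
    ae_of_all _ fun t => mul_nonneg (Real.exp_pos _).le ENNReal.toReal_nonneg
  have hWlint : ∫⁻ t in Ioi (0:ℝ), ENNReal.ofReal (W t)
      = ENNReal.ofReal ((1 / (c - γ)) * (1 / lam)) := by
    have h1 : ∀ t : ℝ, ENNReal.ofReal (W t)
        = ENNReal.ofReal (Real.exp (-(lam * t))) * X t := fun t => by
      rw [hW_def, ENNReal.ofReal_mul (Real.exp_pos _).le, ENNReal.ofReal_toReal (hXbound t)]
    rw [lintegral_congr fun t => h1 t]
    have h2 : ∀ t : ℝ, ENNReal.ofReal (Real.exp (-(lam * t))) * X t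
        = ∫⁻ r in Ioi (0:ℝ), ENNReal.ofReal (Real.exp (-(lam * t)))
          * (ENNReal.ofReal (Real.exp (γ * r)) * P {ω | r < Lq S t ω}) := fun t => by
      simp only [hX_def]
      exact (lintegral_const_mul' _ _ ENNReal.ofReal_ne_top).symm
    rw [lintegral_congr fun t => h2 t]
    have hFm : Measurable fun p : ℝ × ℝ => ENNReal.ofReal (Real.exp (-(lam * p.1)))
        * (ENNReal.ofReal (Real.exp (γ * p.2)) * P {ω | p.2 < Lq S p.1 ω}) :=
      ((((measurable_fst.const_mul lam).neg).exp).ennreal_ofReal).mul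
        (((Real.measurable_exp.comp (measurable_snd.const_mul γ)).ennreal_ofReal).mul hNm)
    rw [lintegral_lintegral_swap hFm.aemeasurable]
    have h3 : ∀ r ∈ Ioi (0:ℝ), ∫⁻ t in Ioi (0:ℝ), ENNReal.ofReal (Real.exp (-(lam * t)))
        * (ENNReal.ofReal (Real.exp (γ * r)) * P {ω | r < Lq S t ω})
        = ENNReal.ofReal (Real.exp (-((c - γ) * r)) * (1 / lam)) := by
      intro r hr
      have h4 : ∀ t : ℝ, ENNReal.ofReal (Real.exp (-(lam * t)))
          * (ENNReal.ofReal (Real.exp (γ * r)) * P {ω | r < Lq S t ω})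
          = ENNReal.ofReal (Real.exp (γ * r))
            * (ENNReal.ofReal (Real.exp (-(lam * t))) * P {ω | r < Lq S t ω}) := fun t => by
        ring
      rw [lintegral_congr fun t => h4 t, lintegral_const_mul' _ _ ENNReal.ofReal_ne_top,
        hS3 r hr, ← ENNReal.ofReal_mul (Real.exp_nonneg _)]
      congr 1
      rw [← mul_assoc, ← Real.exp_add]
      congr 2
      ring
    rw [setLIntegral_congr_fun measurableSet_Ioi h3]
    simp_rw [ENNReal.ofReal_mul (Real.exp_nonneg _)]
    rw [lintegral_mul_const' _ _ ENNReal.ofReal_ne_top, exp_lval 0 hcγ,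
      ← ENNReal.ofReal_mul (div_nonneg (Real.exp_pos _).le hcγ.le)]
    congr 1
    rw [mul_zero, neg_zero, Real.exp_zero]
  have hWint : IntegrableOn W (Ioi (0:ℝ)) :=
    ⟨hWmeas.aestronglyMeasurable, (hasFiniteIntegral_iff_ofReal hWnn).2
      (by rw [hWlint]; exact ENNReal.ofReal_lt_top)⟩
  have hWval : ∫ t in Ioi (0:ℝ), W t = (1 / (c - γ)) * (1 / lam) := by
    rw [integral_eq_lintegral_of_nonneg_ae hWnn hWmeas.aestronglyMeasurable, hWlint,
      ENNReal.toReal_ofReal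
        (mul_nonneg (div_nonneg zero_le_one hcγ.le) (div_nonneg zero_le_one hlam.le))]
  rw [integral_add (exp_int 0 hlam) (hWint.const_mul γ), integral_const_mul, hWval,
    exp_val 0 hlam, mul_zero, neg_zero, Real.exp_zero]
  rw [eq_div_iff (by positivity : lam * (c - γ) ≠ 0)]
  field_simp
  ring
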